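/- arXiv:2102.05640 — 5 statements merged into one kernel-verified Lean document; each statement's English description precedes it below -/
import Mathlib

section
/- If α ∈ F and β = Ξ(α) is defined blockwise by β_i = proj_{2:k}(P_{y_i} α_i), then for the functions f(α) = (1/2)∑_{i,s} x_s'x_i α_i'α_s - ∑_i ∑_{j≠y_i} α_{ij} and g(β) = (1/2)∑_{i,s} x_s'x_i β_i' π P_{y_i} P_{y_s} π' β_s - ∑_i 1'β_i, we have f(Ψ(β)) = g(β) for all β ∈ G. -/
open Matrix Finset

noncomputable def pimat (k : ℕ) : Matrix (Fin (k-1)) (Fin k) ℝ :=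
  Matrix.of fun i j => if (j : ℕ) = 0 then 1 else if (j : ℕ) = (i : ℕ) + 1 then -1 else 0

noncomputable def Pmat (k : ℕ) (y : Fin k) : Matrix (Fin k) (Fin k) ℝ :=
  Matrix.of fun i j =>
    if (i : ℕ) = 0 then (if j = y then 1 else 0)
    else if i = y then (if (j : ℕ) = 0 then 1 else 0)
    else (if j = i then 1 else 0)

noncomputable def Theta (k : ℕ) : Matrix (Fin (k-1)) (Fin (k-1)) ℝ :=
  1 + Matrix.of fun _ _ => 1

noncomputable def qform (k : ℕ) (v b : Fin (k-1) → ℝ) : ℝ :=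
  (1/2) * (b ⬝ᵥ (Theta k *ᵥ b)) - v ⬝ᵥ b

noncomputable def Psi (k n : ℕ) (y : Fin n → Fin k)
    (β : Matrix (Fin (k-1)) (Fin n) ℝ) : Matrix (Fin k) (Fin n) ℝ :=
  Matrix.of fun j i => -(((Pmat k (y i)) * (pimat k)ᵀ) *ᵥ (fun r => β r i)) j

lemma Pmat_transpose (k : ℕ) (y : Fin k) : (Pmat k y)ᵀ = Pmat k y := by
  ext i j
  simp only [Matrix.transpose_apply, Pmat, Matrix.of_apply, Fin.ext_iff]
  split_ifs <;> first | rfl | omega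

lemma Pmat_mulVec (k : ℕ) (y : Fin k) (w : Fin k → ℝ) (j : Fin k) :
    (Pmat k y *ᵥ w) j = w (Equiv.swap ⟨0, y.pos⟩ y j) := by
  have h0 : ∀ c : Fin k, ((c : ℕ) = 0) ↔ c = ⟨0, y.pos⟩ := fun c => by
    simp [Fin.ext_iff]
  simp only [Pmat, Matrix.mulVec, Matrix.of_apply, dotProduct]
  by_cases hj : (j : ℕ) = 0
  · have hj' : j = ⟨0, y.pos⟩ := (h0 j).mp hj
    simp [hj, hj', Equiv.swap_apply_left, ite_mul, Finset.sum_ite_eq']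
  · by_cases hjy : j = y
    · subst hjy
      simp only [hj, if_false, if_pos rfl]
      rw [Equiv.swap_apply_right]
      simp only [h0]
      simp [ite_mul, Finset.sum_ite_eq']
    · have hs : Equiv.swap ⟨0, y.pos⟩ y j = j := by
        rw [Equiv.swap_apply_of_ne_of_ne]
        · exact fun h => hj (by rw [h])
        · exact hjy
      simp [hj, hjy, hs, ite_mul, Finset.sum_ite_eq']

lemma pimat_row_sum (k : ℕ) (r : Fin (k-1)) : ∑ j : Fin k, pimat k r j = 0 := by
  have hr : (r : ℕ) + 1 < k := by have := r.2; omega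
  have hk0 : 0 < k := by omega
  have : ∀ j : Fin k, pimat k r j
      = (if j = (⟨0, hk0⟩ : Fin k) then (1:ℝ) else 0)
        + (if j = (⟨(r:ℕ)+1, hr⟩ : Fin k) then (-1:ℝ) else 0) := by
    intro j
    simp only [pimat, Matrix.of_apply, Fin.ext_iff]
    split_ifs <;> first | omega | norm_num
  simp [this, Finset.sum_add_distrib, Finset.sum_ite_eq']

lemma pimatT_mulVec_sum (k : ℕ) (v : Fin (k-1) → ℝ) :
    ∑ j : Fin k, ((pimat k)ᵀ *ᵥ v) j = 0 := by
  simp only [Matrix.mulVec, Matrix.transpose_apply, dotProduct]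
  rw [Finset.sum_comm]
  have : ∀ r : Fin (k-1), ∑ j : Fin k, pimat k r j * v r = 0 := by
    intro r
    rw [← Finset.sum_mul, pimat_row_sum, zero_mul]
  simp [this]

lemma pimatT_mulVec_zero (k : ℕ) (hk0 : 0 < k) (v : Fin (k-1) → ℝ) :
    ((pimat k)ᵀ *ᵥ v) ⟨0, hk0⟩ = ∑ r, v r := by
  simp [Matrix.mulVec, Matrix.transpose_apply, dotProduct, pimat]

theorem stmt3 (k n d : ℕ) (hk : 2 ≤ k) (hn : 1 ≤ n) (C : ℝ) (hC : 0 < C)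
    (x : Fin n → Fin d → ℝ) (y : Fin n → Fin k)
    (β : Matrix (Fin (k-1)) (Fin n) ℝ)
    (hβ : ∀ (j : Fin (k-1)) (i : Fin n), β j i ∈ Set.Icc 0 C) :
    (1/2) * ∑ i, ∑ s, (x s ⬝ᵥ x i) *
        ((fun j => Psi k n y β j i) ⬝ᵥ (fun j => Psi k n y β j s))
      - ∑ i, ∑ j ∈ Finset.univ.filter (· ≠ y i), Psi k n y β j i
    = (1/2) * ∑ i, ∑ s, (x s ⬝ᵥ x i) *
        ((fun r => β r i) ⬝ᵥ
          ((pimat k * Pmat k (y i) * Pmat k (y s) * (pimat k)ᵀ) *ᵥ (fun r => β r s)))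
      - ∑ i, ∑ r, β r i := by
  have hquad : ∀ i s : Fin n,
      ((fun j => Psi k n y β j i) ⬝ᵥ (fun j => Psi k n y β j s))
      = ((fun r => β r i) ⬝ᵥ
          ((pimat k * Pmat k (y i) * Pmat k (y s) * (pimat k)ᵀ) *ᵥ (fun r => β r s))) := by
    intro i s
    have hA : pimat k * Pmat k (y i) * Pmat k (y s) * (pimat k)ᵀ
        = (Pmat k (y i) * (pimat k)ᵀ)ᵀ * (Pmat k (y s) * (pimat k)ᵀ) := by
      rw [Matrix.transpose_mul, Matrix.transpose_transpose, Pmat_transpose,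
        Matrix.mul_assoc (pimat k * Pmat k (y i)), ← Matrix.mul_assoc]
    rw [hA, ← Matrix.mulVec_mulVec, Matrix.dotProduct_mulVec, Matrix.vecMul_transpose]
    simp [Psi, dotProduct, neg_mul_neg]
  have hlin : ∀ i : Fin n,
      ∑ j ∈ Finset.univ.filter (· ≠ y i), Psi k n y β j i = ∑ r, β r i := by
    intro i
    have hP : ∀ j, Psi k n y β j i
        = -((pimat k)ᵀ *ᵥ (fun r => β r i)) (Equiv.swap ⟨0, (y i).pos⟩ (y i) j) := by
      intro j
      simp only [Psi, Matrix.of_apply, ← Matrix.mulVec_mulVec, Pmat_mulVec]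
    rw [Finset.filter_ne', Finset.sum_erase_eq_sub (Finset.mem_univ _)]
    simp only [hP]
    rw [Equiv.swap_apply_right, pimatT_mulVec_zero]
    rw [Finset.sum_neg_distrib,
      Equiv.sum_comp (Equiv.swap ⟨0, (y i).pos⟩ (y i)) (fun j => ((pimat k)ᵀ *ᵥ (fun r => β r i)) j),
      pimatT_mulVec_sum]
    ring
  simp only [hquad, hlin]
end

section
/- Let b̃ be the unique minimizer of min_{0 ≤ b ≤ C} (1/2)b'(I+O)b - v'b and let γ̃ = ∑_i b̃_i. Then b̃ = clip(v - γ̃·1), where clip applies t ↦ max(0, min(C, t)) entrywise. -/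
/-! Since `Θ = I + 𝟙𝟙ᵀ`, moving the single coordinate `bᵢ` of `b` to `t` changes the objective by
exactly `(t - bᵢ) (t - (vᵢ - γ))` with `γ = ∑ⱼ bⱼ`. Minimality of `b` over the box therefore makes
`bᵢ` a point of `[0, C]` at which `t ↦ (t - bᵢ) (t - (vᵢ - γ))` is nonnegative on all of `[0, C]`,
and the only such point is the projection of `vᵢ - γ` onto `[0, C]`. -/

open Matrix Finset

theorem Fintype.sum_apply_update {ι M : Type*} {α : ι → Type*} [Fintype ι] [DecidableEq ι]
    [AddCommGroup M] (F : ∀ j, α j → M) (f : ∀ j, α j) (i : ι) (a : α i) :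
    ∑ j, F j (Function.update f i a j) = ∑ j, F j (f j) - F i (f i) + F i a := by
  simp only [Function.apply_update F f i a]
  rw [sum_update_of_mem (mem_univ i), sum_eq_add_sum_sdiff_singleton_of_mem (mem_univ i)]
  abel

lemma qform_eq_sum (k : ℕ) (v b : Fin (k-1) → ℝ) :
    qform k v b = (1/2) * (∑ j, b j ^ 2 + (∑ j, b j) ^ 2) - ∑ j, v j * b j := by
  rw [qform, Theta, add_mulVec, one_mulVec]
  simp only [dotProduct, mulVec, of_apply, Pi.add_apply, one_mul, mul_add, sum_add_distrib,
    ← sum_mul, sq]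

lemma qform_update_sub_qform (k : ℕ) (v b : Fin (k-1) → ℝ) (i : Fin (k-1)) (t : ℝ) :
    qform k v (Function.update b i t) - qform k v b = (t - b i) * (t - (v i - ∑ j, b j)) := by
  rw [qform_eq_sum, qform_eq_sum, Fintype.sum_apply_update (fun _ x => x ^ 2),
    Fintype.sum_apply_update (fun _ x => x), Fintype.sum_apply_update (fun j x => v j * x)]
  ring

lemma eq_max_min_of_forall_sub_mul_sub_nonneg {a d C : ℝ} (ha : a ∈ Set.Icc 0 C)
    (h : ∀ t ∈ Set.Icc 0 C, 0 ≤ (t - a) * (t - d)) : a = max 0 (min C d) := by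
  obtain ⟨ha0, haC⟩ := ha
  set p := max 0 (min C d)
  have hp : p ∈ Set.Icc 0 C := ⟨le_max_left _ _, max_le (ha0.trans haC) (min_le_left _ _)⟩
  have hproj : 0 ≤ (p - a) * (d - p) := by
    rcases le_total d 0 with hd0 | hd0
    · have : p = 0 := by simp [p, hd0]
      nlinarith
    rcases le_total d C with hdC | hdC
    · have : p = d := by simp [p, hd0, hdC]
      simp [this]
    · have : p = C := by simp [p, hdC, ha0.trans haC]
      nlinarith
  -- testing at the midpoint of `a` and `p` and adding `hproj` leaves `0 ≤ -(p - a)^2 / 4`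
  have hmid := h ((a + p) / 2) ⟨by linarith [hp.1], by linarith [hp.2]⟩
  nlinarith

theorem stmt6_general (k : ℕ) (C : ℝ) (v b : Fin (k-1) → ℝ)
    (hfeas : ∀ i, b i ∈ Set.Icc 0 C)
    (hmin : ∀ b', (∀ i, b' i ∈ Set.Icc 0 C) → qform k v b ≤ qform k v b') :
    ∀ i, b i = max 0 (min C (v i - ∑ j, b j)) := by
  intro i
  refine eq_max_min_of_forall_sub_mul_sub_nonneg (hfeas i) fun t ht => ?_
  have hupdate_feas : ∀ j, Function.update b i t j ∈ Set.Icc 0 C :=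
    Function.forall_update_iff b (p := fun j x => x ∈ Set.Icc 0 C) |>.mpr
      ⟨ht, fun j _ => hfeas j⟩
  rw [← qform_update_sub_qform]
  exact sub_nonneg.mpr (hmin _ hupdate_feas)

theorem stmt6 (k : ℕ) (hk : 2 ≤ k) (C : ℝ) (hC : 0 < C) (v b : Fin (k-1) → ℝ)
    (hfeas : ∀ i, b i ∈ Set.Icc 0 C)
    (hmin : ∀ b', (∀ i, b' i ∈ Set.Icc 0 C) → qform k v b ≤ qform k v b') :
    ∀ i, b i = max 0 (min C (v i - ∑ j, b j)) :=
  stmt6_general k C v b hfeas hmin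
end

section
/- Let b̃ be the unique minimizer of min_{0 ≤ b ≤ C} (1/2)b'(I+O)b - v'b and γ̃ = ∑_i b̃_i. If v_max := max_i v_i > 0, then 0 < γ̃ < v_max. -/
open Matrix Finset

/-!
A minimizer `b` of `q(b) = ½ bᵀΘb - vᵀb` over the box cannot be improved along the ray
`t ↦ t • b` (the box is star-shaped about `0`), and the first-order condition at `t = 1` reads
`‖b‖² + γ² = bᵀΘb ≤ vᵀb ≤ v_max γ`; once `b ≠ 0` this forces `γ < v_max`. And `b = 0` is not a
minimizer: moving from `0` along the coordinate of a maximal `vᵢ` lowers `q` to `t² - t v_max`.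
-/

open Filter Topology in
theorem nonpos_of_forall_mul_le_sq_mul {x a ε : ℝ} (hε : 0 < ε)
    (h : ∀ s ∈ Set.Ioc 0 ε, s * x ≤ s ^ 2 * a) : x ≤ 0 := by
  have hlim : Tendsto (fun s : ℝ => s * a) (𝓝[>] 0) (𝓝 0) := by
    simpa using ((continuous_mul_const a).tendsto 0).mono_left nhdsWithin_le_nhds
  refine ge_of_tendsto hlim ?_
  filter_upwards [Ioo_mem_nhdsGT hε] with s hs
  have hsx := h s ⟨hs.1, hs.2.le⟩
  rw [sq, mul_assoc] at hsx
  exact le_of_mul_le_mul_left hsx hs.1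

theorem dotProduct_Theta_mulVec (k : ℕ) (b : Fin (k-1) → ℝ) :
    b ⬝ᵥ (Theta k *ᵥ b) = b ⬝ᵥ b + (∑ i, b i) ^ 2 := by
  simp only [Theta, add_mulVec, one_mulVec, dotProduct_add, add_right_inj]
  simp only [dotProduct, mulVec, of_apply, one_mul, sq, sum_mul]

theorem qform_smul (k : ℕ) (v b : Fin (k-1) → ℝ) (c : ℝ) :
    qform k v (c • b) = c ^ 2 / 2 * (b ⬝ᵥ (Theta k *ᵥ b)) - c * (v ⬝ᵥ b) := by
  simp only [qform, mulVec_smul, dotProduct_smul, smul_dotProduct, smul_eq_mul]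
  ring

theorem qform_single (k : ℕ) (v : Fin (k-1) → ℝ) (i : Fin (k-1)) (t : ℝ) :
    qform k v (Pi.single i t) = t ^ 2 - t * v i := by
  rw [qform, dotProduct_Theta_mulVec]
  simp only [dotProduct_single, Pi.single_eq_same, sum_pi_single', mem_univ, ↓reduceIte]
  ring

theorem dotProduct_Theta_mulVec_le_of_isMinOn {k : ℕ} {v b : Fin (k-1) → ℝ}
    {s : Set (Fin (k-1) → ℝ)} (hs : StarConvex ℝ 0 s) (hb : b ∈ s)
    (hmin : IsMinOn (qform k v) s b) : b ⬝ᵥ (Theta k *ᵥ b) ≤ v ⬝ᵥ b := by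
  set A := b ⬝ᵥ (Theta k *ᵥ b)
  have hray : ∀ t ∈ Set.Ioc (0 : ℝ) 1, t * (A - v ⬝ᵥ b) ≤ t ^ 2 * (A / 2) := by
    intro t ht
    have h : qform k v b ≤ qform k v ((1 - t) • b) :=
      hmin (hs.smul_mem hb (sub_nonneg.2 ht.2) (sub_le_self 1 ht.1.le))
    rw [qform_smul, qform] at h
    nlinarith
  linarith [nonpos_of_forall_mul_le_sq_mul one_pos hray]

theorem le_zero_of_isMinOn_zero {k : ℕ} {v : Fin (k-1) → ℝ} {C : ℝ} (hC : 0 < C)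
    (hmin : IsMinOn (qform k v) (Set.univ.pi fun _ => Set.Icc 0 C) 0) (i : Fin (k-1)) :
    v i ≤ 0 := by
  refine nonpos_of_forall_mul_le_sq_mul (a := 1) hC fun t ht => ?_
  have hmem : Pi.single i t ∈ Set.univ.pi fun _ => Set.Icc 0 C := by
    intro j _
    rcases eq_or_ne j i with rfl | hj
    · simpa using ⟨ht.1.le, ht.2⟩
    · simpa [hj] using hC.le
  have h : qform k v 0 ≤ qform k v (Pi.single i t) := hmin hmem
  rw [qform_single, qform] at h
  simp only [mulVec_zero, dotProduct_zero, mul_zero, sub_self, sub_nonneg] at h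
  linarith

theorem dotProduct_le_sup'_mul_sum {ι : Type*} [Fintype ι] (hne : (univ : Finset ι).Nonempty)
    (v b : ι → ℝ) (hb : 0 ≤ b) : v ⬝ᵥ b ≤ univ.sup' hne v * ∑ i, b i := by
  rw [mul_sum]
  exact sum_le_sum fun i _ => mul_le_mul_of_nonneg_right (le_sup' v (mem_univ i)) (hb i)

theorem stmt8_general (k : ℕ) (C : ℝ) (hC : 0 < C) (v b : Fin (k-1) → ℝ)
    (hfeas : ∀ i, b i ∈ Set.Icc 0 C)
    (hmin : ∀ b', (∀ i, b' i ∈ Set.Icc 0 C) → qform k v b ≤ qform k v b')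
    (hne : (Finset.univ : Finset (Fin (k-1))).Nonempty)
    (hvmax : 0 < Finset.univ.sup' hne v) :
    0 < ∑ j, b j ∧ ∑ j, b j < Finset.univ.sup' hne v := by
  set box : Set (Fin (k-1) → ℝ) := Set.univ.pi fun _ => Set.Icc 0 C
  have hbox : b ∈ box := Set.mem_univ_pi.2 hfeas
  have hmin' : IsMinOn (qform k v) box b := fun b' hb' => hmin b' (Set.mem_univ_pi.1 hb')
  have hb0 : 0 ≤ b := fun i => (hfeas i).1
  have hb_ne : b ≠ 0 := by
    rintro rfl
    obtain ⟨i, -, hi⟩ := exists_mem_eq_sup' hne v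
    linarith [le_zero_of_isMinOn_zero hC hmin' i]
  have hstar : StarConvex ℝ 0 box :=
    (convex_pi fun _ _ => convex_Icc 0 C).starConvex fun _ _ => ⟨le_rfl, hC.le⟩
  have hfirst := dotProduct_Theta_mulVec_le_of_isMinOn hstar hbox hmin'
  rw [dotProduct_Theta_mulVec] at hfirst
  have hbb : 0 < b ⬝ᵥ b := by simpa using dotProduct_self_star_pos_iff.2 hb_ne
  have hvb := dotProduct_le_sup'_mul_sum hne v b hb0
  have hγ : 0 < ∑ j, b j := pos_of_mul_pos_right (by linarith [sq_nonneg (∑ j, b j)]) hvmax.le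
  exact ⟨hγ, by nlinarith⟩

theorem stmt8 (k : ℕ) (hk : 2 ≤ k) (C : ℝ) (hC : 0 < C) (v b : Fin (k-1) → ℝ)
    (hfeas : ∀ i, b i ∈ Set.Icc 0 C)
    (hmin : ∀ b', (∀ i, b' i ∈ Set.Icc 0 C) → qform k v b ≤ qform k v b')
    (hne : (Finset.univ : Finset (Fin (k-1))).Nonempty)
    (hvmax : 0 < Finset.univ.sup' hne v) :
    0 < ∑ j, b j ∧ ∑ j, b j < Finset.univ.sup' hne v :=
  stmt8_general k C hC v b hfeas hmin hne hvmax
end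

section
/- Let ⟨1⟩,…,⟨k-1⟩ be a permutation sorting v in descending order: v_{⟨1⟩} ≥ ⋯ ≥ v_{⟨k-1⟩}. Fix n_U, n_M ∈ {0,…,k-1} with n_U + n_M ≤ k-1, set S = ∑_{i=n_U+1}^{n_U+n_M} v_{⟨i⟩}, γ = (C·n_U + S)/(n_M + 1), and define b by b_{⟨i⟩} = C if i ≤ n_U, b_{⟨i⟩} = v_{⟨i⟩} - γ if n_U < i ≤ n_U+n_M, and b_{⟨i⟩} = 0 otherwise. Then the all-ones matrix satisfies O b = γ·1, and ((I+O)b)_{⟨i⟩} equals C+γ for i ≤ n_U, v_{⟨i⟩} for n_U < i ≤ n_U+n_M, and γ for i > n_U+n_M. -/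
/-! Since `O b` is the constant vector `∑ b`, everything reduces to `∑ b = C n_U + S - n_M γ`, which is
`γ` by the choice of `γ`; then `(I + O) b = b + γ 1` is read off coordinatewise. -/

open Matrix Finset

theorem Fin.card_filter_le_val_lt_add {m : ℕ} (a n : ℕ) (h : a + n ≤ m) :
    #{i : Fin m | a ≤ (i : ℕ) ∧ (i : ℕ) < a + n} = n := by
  rw [← card_map Fin.valEmbedding]
  have hmap : ({i : Fin m | a ≤ (i : ℕ) ∧ (i : ℕ) < a + n} : Finset _).map Fin.valEmbedding =
      Ico a (a + n) := by
    ext x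
    simp only [mem_map, mem_filter, mem_univ, true_and, Fin.valEmbedding_apply, mem_Ico]
    exact ⟨fun ⟨i, hi, hx⟩ => hx ▸ hi, fun hx => ⟨⟨x, by omega⟩, hx, rfl⟩⟩
  rw [hmap, Nat.card_Ico, Nat.add_sub_cancel_left]

theorem Fin.sum_ite_val_lt_ite_val_lt {R : Type*} [AddCommMonoid R] {m : ℕ} (a n : ℕ)
    (h : a + n ≤ m) (c : R) (g : Fin m → R) :
    ∑ i : Fin m, (if (i : ℕ) < a then c else if (i : ℕ) < a + n then g i else 0) =
      a • c + ∑ i ∈ univ.filter fun i : Fin m => a ≤ (i : ℕ) ∧ (i : ℕ) < a + n, g i := by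
  simp only [sum_ite, Finset.sum_const, Fin.card_filter_val_lt, min_eq_right (by omega : a ≤ m),
    smul_zero, add_zero, filter_filter, not_lt]

theorem Matrix.of_const_one_mulVec {n R : Type*} [Fintype n] [NonAssocSemiring R] (b : n → R) :
    (Matrix.of fun _ _ => (1 : R) : Matrix n n R) *ᵥ b = fun _ => ∑ j, b j := by
  funext i
  exact one_dotProduct b

theorem Theta_mulVec (k : ℕ) (b : Fin (k-1) → ℝ) :
    Theta k *ᵥ b = b + fun _ => ∑ j, b j := by
  rw [Theta, add_mulVec, one_mulVec, of_const_one_mulVec]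

theorem stmt10_general (k : ℕ) (C : ℝ) (v : Fin (k-1) → ℝ)
    (σ : Equiv.Perm (Fin (k-1)))
    (nU nM : ℕ) (hUM : nU + nM ≤ k - 1)
    (S γ : ℝ)
    (hS : S = ∑ i ∈ Finset.univ.filter
        (fun i : Fin (k-1) => nU ≤ (i : ℕ) ∧ (i : ℕ) < nU + nM), v (σ i))
    (hγ : γ = (C * (nU : ℝ) + S) / ((nM : ℝ) + 1))
    (b : Fin (k-1) → ℝ)
    (hb : ∀ i : Fin (k-1), b (σ i) =
      if (i : ℕ) < nU then C
      else if (i : ℕ) < nU + nM then v (σ i) - γ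
      else 0) :
    ((Matrix.of fun _ _ => (1 : ℝ) : Matrix (Fin (k-1)) (Fin (k-1)) ℝ) *ᵥ b
        = fun _ => γ) ∧
    ∀ i : Fin (k-1), (Theta k *ᵥ b) (σ i) =
      if (i : ℕ) < nU then C + γ
      else if (i : ℕ) < nU + nM then v (σ i)
      else γ := by
  have hsum : ∑ j, b j = γ := by
    have hγ' : γ * (nM + 1) = C * nU + S := by
      rw [hγ, div_mul_cancel₀]
      positivity
    calc ∑ j, b j = ∑ i, b (σ i) := (Equiv.sum_comp σ b).symm
      _ = nU • C + ∑ i ∈ univ.filter fun i : Fin (k-1) => nU ≤ (i : ℕ) ∧ (i : ℕ) < nU + nM,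
            (v (σ i) - γ) := by
        simp only [hb, Fin.sum_ite_val_lt_ite_val_lt nU nM hUM]
      _ = C * nU + S - nM * γ := by
        rw [sum_sub_distrib, ← hS, Finset.sum_const, Fin.card_filter_le_val_lt_add nU nM hUM,
          nsmul_eq_mul, nsmul_eq_mul]
        ring
      _ = γ := by linear_combination -hγ'
  refine ⟨by rw [of_const_one_mulVec, hsum], fun i => ?_⟩
  rw [Theta_mulVec, Pi.add_apply, hsum, hb i]
  split_ifs <;> ring

theorem stmt10 (k : ℕ) (hk : 2 ≤ k) (C : ℝ) (hC : 0 < C) (v : Fin (k-1) → ℝ)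
    (σ : Equiv.Perm (Fin (k-1)))
    (hsort : ∀ i j : Fin (k-1), i ≤ j → v (σ j) ≤ v (σ i))
    (nU nM : ℕ) (hUM : nU + nM ≤ k - 1)
    (S γ : ℝ)
    (hS : S = ∑ i ∈ Finset.univ.filter
        (fun i : Fin (k-1) => nU ≤ (i : ℕ) ∧ (i : ℕ) < nU + nM), v (σ i))
    (hγ : γ = (C * (nU : ℝ) + S) / ((nM : ℝ) + 1))
    (b : Fin (k-1) → ℝ)
    (hb : ∀ i : Fin (k-1), b (σ i) =
      if (i : ℕ) < nU then C
      else if (i : ℕ) < nU + nM then v (σ i) - γ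
      else 0) :
    ((Matrix.of fun _ _ => (1 : ℝ) : Matrix (Fin (k-1)) (Fin (k-1)) ℝ) *ᵥ b
        = fun _ => γ) ∧
    ∀ i : Fin (k-1), (Theta k *ᵥ b) (σ i) =
      if (i : ℕ) < nU then C + γ
      else if (i : ℕ) < nU + nM then v (σ i)
      else γ :=
  stmt10_general k C v σ nU nM hUM S γ hS hγ b hb
end

section
/- With b, γ defined as in the candidate solution from sorted indices (b_{⟨i⟩} = C for i ≤ n_U, = v_{⟨i⟩} - γ for n_U < i ≤ n_U+n_M, = 0 otherwise, where γ = (C·n_U + ∑_{i=n_U+1}^{n_U+n_M} v_{⟨i⟩})/(n_M+1)), b is the unique minimizer of (1/2)b'(I+O)b - v'b over [0,C]^{k-1} if and only if for all i ∈ [k-1]: v_{⟨i⟩} ≥ C+γ when i ≤ n_U, γ ≤ v_{⟨i⟩} ≤ C+γ when n_U < i ≤ n_U+n_M, and v_{⟨i⟩} ≤ γ when i > n_U+n_M. -/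
open Matrix Finset

lemma qform_eq (k : ℕ) (v b : Fin (k-1) → ℝ) :
    qform k v b = (1/2)*((∑ i, (b i)^2) + (∑ i, b i)^2) - ∑ i, v i * b i := by
  unfold qform Theta
  have h1 : ∀ i, ((1 + Matrix.of fun _ _ => (1:ℝ)) *ᵥ b) i = b i + ∑ j, b j := by
    intro i
    simp [Matrix.mulVec, dotProduct, Matrix.add_apply, Matrix.one_apply, add_mul,
      Finset.sum_add_distrib, Finset.sum_ite_eq, ite_mul]
  simp only [dotProduct, h1]
  have : ∑ i, b i * (b i + ∑ j, b j) = (∑ i, (b i)^2) + (∑ i, b i)^2 := by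
    rw [Finset.sum_congr rfl (fun i _ => mul_add (b i) (b i) (∑ j, b j)),
      Finset.sum_add_distrib, ← Finset.sum_mul]
    ring_nf
  rw [this]

lemma qform_sub (k : ℕ) (v x y : Fin (k-1) → ℝ) :
    qform k v y = qform k v x
      + (∑ i, (x i + (∑ j, x j) - v i) * (y i - x i))
      + (1/2)*(∑ i, (y i - x i)^2) + (1/2)*(∑ i, (y i - x i))^2 := by
  rw [qform_eq, qform_eq]
  have e1 : ∑ i, (x i + (∑ j, x j) - v i) * (y i - x i)
      = ((∑ i, x i * y i) - (∑ i, (x i)^2) - (∑ i, v i * y i) + (∑ i, v i * x i))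
        + (∑ j, x j) * ((∑ i, y i) - ∑ i, x i) := by
    rw [Finset.sum_congr rfl (fun i _ => show (x i + (∑ j, x j) - v i) * (y i - x i)
        = (x i * y i - (x i)^2 - v i * y i + v i * x i) + (∑ j, x j) * (y i - x i) by ring),
      Finset.sum_add_distrib, Finset.sum_add_distrib, Finset.sum_sub_distrib,
      Finset.sum_sub_distrib, ← Finset.mul_sum, Finset.sum_sub_distrib]
  have e2 : ∑ i, (y i - x i)^2
      = (∑ i, (y i)^2) - 2*(∑ i, x i * y i) + ∑ i, (x i)^2 := by
    rw [Finset.sum_congr rfl (fun i _ => show (y i - x i)^2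
        = ((y i)^2 - 2*(x i * y i) + (x i)^2) by ring),
      Finset.sum_add_distrib, Finset.sum_sub_distrib, ← Finset.mul_sum]
  have e3 : ∑ i, (y i - x i) = (∑ i, y i) - ∑ i, x i := Finset.sum_sub_distrib _ _
  rw [e1, e2, e3]
  ring

lemma perturb (k : ℕ) (v b : Fin (k-1) → ℝ) (C : ℝ) (j : Fin (k-1)) (t : ℝ)
    (hfeas : ∀ i, b i ∈ Set.Icc 0 C) (h1 : 0 ≤ b j + t) (h2 : b j + t ≤ C)
    (hmin : ∀ b', (∀ i, b' i ∈ Set.Icc (0:ℝ) C) → qform k v b ≤ qform k v b') :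
    0 ≤ (b j + (∑ i, b i) - v j) * t + t^2 := by
  set y := Function.update b j (b j + t) with hy
  have hyf : ∀ i, y i ∈ Set.Icc (0:ℝ) C := by
    intro i
    by_cases h : i = j
    · subst h; simp only [hy, Function.update_self]; exact ⟨h1, h2⟩
    · simp only [hy, Function.update_of_ne h]; exact hfeas i
  have hd : ∀ i, i ≠ j → y i - b i = 0 := by
    intro i h; simp [hy, Function.update_of_ne h]
  have hdj : y j - b j = t := by simp [hy]
  have s1 : ∑ i, (b i + (∑ l, b l) - v i) * (y i - b i)
      = (b j + (∑ l, b l) - v j) * t := by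
    rw [Finset.sum_eq_single j (fun i _ h => by rw [hd i h, mul_zero])
      (fun h => absurd (Finset.mem_univ j) h), hdj]
  have s2 : ∑ i, (y i - b i)^2 = t^2 := by
    rw [Finset.sum_eq_single j (fun i _ h => by rw [hd i h]; ring)
      (fun h => absurd (Finset.mem_univ j) h), hdj]
  have s3 : ∑ i, (y i - b i) = t := by
    rw [Finset.sum_eq_single j (fun i _ h => hd i h)
      (fun h => absurd (Finset.mem_univ j) h), hdj]
  have := hmin y hyf
  rw [qform_sub k v b y, s1, s2, s3] at this
  nlinarith [this]

lemma card_filter_fin (n m : ℕ) (hm : m ≤ n) :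
    (Finset.univ.filter (fun i : Fin n => (i:ℕ) < m)).card = m := by
  rw [Finset.card_filter, Fin.sum_univ_eq_sum_range (fun i => if i < m then 1 else 0),
    ← Finset.card_filter]
  have : (Finset.range n).filter (fun i => i < m) = Finset.range m := by
    ext i; simp; omega
  rw [this, Finset.card_range]

lemma card_filter_fin_mid (n a m : ℕ) (hm : a + m ≤ n) :
    (Finset.univ.filter (fun i : Fin n => a ≤ (i:ℕ) ∧ (i:ℕ) < a + m)).card = m := by
  rw [Finset.card_filter, Fin.sum_univ_eq_sum_range (fun i => if a ≤ i ∧ i < a + m then 1 else 0),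
    ← Finset.card_filter]
  have : (Finset.range n).filter (fun i => a ≤ i ∧ i < a + m) = Finset.Ico a (a+m) := by
    ext i; simp [Finset.mem_Ico]; omega
  rw [this, Nat.card_Ico]
  omega

theorem stmt11 (k : ℕ) (hk : 2 ≤ k) (C : ℝ) (hC : 0 < C) (v : Fin (k-1) → ℝ)
    (σ : Equiv.Perm (Fin (k-1)))
    (hsort : ∀ i j : Fin (k-1), i ≤ j → v (σ j) ≤ v (σ i))
    (nU nM : ℕ) (hUM : nU + nM ≤ k - 1)
    (γ : ℝ)
    (hγ : γ = (C * (nU : ℝ) + ∑ i ∈ Finset.univ.filter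
        (fun i : Fin (k-1) => nU ≤ (i : ℕ) ∧ (i : ℕ) < nU + nM), v (σ i)) / ((nM : ℝ) + 1))
    (b : Fin (k-1) → ℝ)
    (hb : ∀ i : Fin (k-1), b (σ i) =
      if (i : ℕ) < nU then C
      else if (i : ℕ) < nU + nM then v (σ i) - γ
      else 0) :
    ((∀ i, b i ∈ Set.Icc 0 C) ∧
      ∀ b', (∀ i, b' i ∈ Set.Icc 0 C) → qform k v b ≤ qform k v b') ↔
    ∀ i : Fin (k-1),
      ((i : ℕ) < nU → C + γ ≤ v (σ i)) ∧
      (nU ≤ (i : ℕ) ∧ (i : ℕ) < nU + nM → γ ≤ v (σ i) ∧ v (σ i) ≤ C + γ) ∧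
      (nU + nM ≤ (i : ℕ) → v (σ i) ≤ γ) := by
  -- Key fact: the sum of b equals γ
  have hS : ∑ j, b j = γ := by
    have h1 : ∑ j, b j = ∑ i, b (σ i) := (Equiv.sum_comp σ b).symm
    rw [h1, Finset.sum_congr rfl (fun i _ => hb i),
      ← Finset.sum_filter_add_sum_filter_not Finset.univ (fun i : Fin (k-1) => (i:ℕ) < nU)]
    have hA : ∑ i ∈ Finset.univ.filter (fun i : Fin (k-1) => (i:ℕ) < nU),
        (if (i:ℕ) < nU then C else if (i:ℕ) < nU + nM then v (σ i) - γ else 0) = C * nU := by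
      rw [Finset.sum_congr rfl (fun i hi => if_pos (Finset.mem_filter.mp hi).2),
        Finset.sum_const, card_filter_fin _ _ (by omega)]
      simp [mul_comm]
    have hfe : Finset.univ.filter (fun i : Fin (k-1) => ¬ (i:ℕ) < nU)
        = Finset.univ.filter (fun i : Fin (k-1) => nU ≤ (i:ℕ)) := by
      apply Finset.filter_congr; intro i _; simp
    have hB : ∑ i ∈ Finset.univ.filter (fun i : Fin (k-1) => ¬ (i:ℕ) < nU),
        (if (i:ℕ) < nU then C else if (i:ℕ) < nU + nM then v (σ i) - γ else 0)
        = (∑ i ∈ Finset.univ.filter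
          (fun i : Fin (k-1) => nU ≤ (i : ℕ) ∧ (i : ℕ) < nU + nM), v (σ i)) - nM * γ := by
      rw [Finset.sum_congr rfl (fun i hi => if_neg (Finset.mem_filter.mp hi).2)]
      rw [hfe, Finset.sum_ite, Finset.sum_const, smul_zero, add_zero, Finset.filter_filter]
      rw [Finset.sum_sub_distrib, Finset.sum_const, nsmul_eq_mul]
      rw [card_filter_fin_mid _ _ _ (by omega)]
    rw [hA, hB]
    have hnM : ((nM : ℝ) + 1) ≠ 0 := by positivity
    field_simp at hγ
    linarith [hγ]
  constructor
  · rintro ⟨hfeas, hmin⟩ i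
    refine ⟨?_, ?_, ?_⟩
    · intro hi
      have hbi := hb i
      rw [if_pos hi] at hbi
      by_contra hcon
      push_neg at hcon
      set s := min ((C + γ - v (σ i))/2) C with hs
      have hs0 : 0 < s := lt_min (by linarith) hC
      have hsle : s ≤ (C + γ - v (σ i))/2 := min_le_left _ _
      have hsC : s ≤ C := min_le_right _ _
      have hp := perturb k v b C (σ i) (-s) hfeas (by rw [hbi]; linarith) (by rw [hbi]; linarith)
        hmin
      rw [hS, hbi] at hp
      nlinarith
    · rintro ⟨h1, h2⟩
      have hbi := hb i
      rw [if_neg (by omega), if_pos h2] at hbi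
      have := hfeas (σ i)
      rw [hbi] at this
      exact ⟨by linarith [this.1], by linarith [this.2]⟩
    · intro hi
      have hbi := hb i
      rw [if_neg (by omega), if_neg (by omega)] at hbi
      by_contra hcon
      push_neg at hcon
      set s := min ((v (σ i) - γ)/2) C with hs
      have hs0 : 0 < s := lt_min (by linarith) hC
      have hsle : s ≤ (v (σ i) - γ)/2 := min_le_left _ _
      have hsC : s ≤ C := min_le_right _ _
      have hp := perturb k v b C (σ i) s hfeas (by rw [hbi]; linarith) (by rw [hbi]; linarith)
        hmin
      rw [hS, hbi] at hp
      nlinarith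
  · intro h
    constructor
    · intro i0
      have hbi := hb (σ.symm i0)
      rw [Equiv.apply_symm_apply] at hbi
      have hcond := h (σ.symm i0)
      rw [Equiv.apply_symm_apply] at hcond
      split_ifs at hbi with h1 h2
      · rw [hbi]; exact ⟨hC.le, le_refl C⟩
      · rw [hbi]
        have := hcond.2.1 ⟨by omega, h2⟩
        exact ⟨by linarith [this.1], by linarith [this.2]⟩
      · rw [hbi]; exact ⟨le_refl 0, hC.le⟩
    · intro b' hb'
      rw [qform_sub k v b b', hS]
      have T1 : 0 ≤ ∑ i, (b i + γ - v i) * (b' i - b i) := by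
        rw [← Equiv.sum_comp σ (fun i => (b i + γ - v i) * (b' i - b i))]
        apply Finset.sum_nonneg
        intro i _
        have hbi := hb i
        have hcond := h i
        by_cases h1 : (i:ℕ) < nU
        · rw [if_pos h1] at hbi
          rw [hbi]
          have hv := hcond.1 h1
          have hub := (hb' (σ i)).2
          nlinarith
        · by_cases h2 : (i:ℕ) < nU + nM
          · rw [if_neg h1, if_pos h2] at hbi
            rw [hbi]
            have he : v (σ i) - γ + γ - v (σ i) = 0 := by ring
            rw [he, zero_mul]
          · rw [if_neg h1, if_neg h2] at hbi
            rw [hbi]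
            have hv := hcond.2.2 (by omega)
            have hlb := (hb' (σ i)).1
            nlinarith
      have T2 : 0 ≤ ∑ i, (b' i - b i)^2 := Finset.sum_nonneg fun i _ => sq_nonneg _
      have T3 : 0 ≤ (∑ i, (b' i - b i))^2 := sq_nonneg _
      linarith
end
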